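/- arXiv:2111.02501 — 2 statements merged into one kernel-verified Lean document; each statement's English description precedes it below -/
import Mathlib

section
/- Let R be a commutative Krasner hyperring with nonzero identity and let T be a proper hyperideal of R. If T is a φ-primary hyperideal of R for a function φ : L(R) → L(R) ∪ {∅} with φ ≤ φ₃ (i.e. φ(N) ⊆ N³ for every hyperideal N), then T is a w-primary hyperideal of R. -/
universe u

/-- A commutative Krasner hyperring with nonzero identity. -/
class KrasnerHyperring (R : Type u) where
  hadd : R → R → Set R
  mul : R → R → R
  zero : R
  one : R
  neg : R → R
  hadd_nonempty : ∀ a b : R, (hadd a b).Nonempty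
  hadd_comm : ∀ a b : R, hadd a b = hadd b a
  hadd_assoc : ∀ a b c : R, (⋃ x ∈ hadd a b, hadd x c) = ⋃ y ∈ hadd b c, hadd a y
  hadd_zero : ∀ a : R, hadd a zero = {a}
  zero_mem_hadd_neg : ∀ a : R, zero ∈ hadd a (neg a)
  neg_unique : ∀ a b : R, zero ∈ hadd a b → b = neg a
  reversible : ∀ a b c : R, c ∈ hadd a b → b ∈ hadd (neg a) c
  mul_assoc : ∀ a b c : R, mul (mul a b) c = mul a (mul b c)
  mul_comm : ∀ a b : R, mul a b = mul b a
  mul_one : ∀ a : R, mul a one = a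
  mul_zero : ∀ a : R, mul a zero = zero
  one_ne_zero : one ≠ zero
  distrib : ∀ a b c : R, (fun x => mul a x) '' hadd b c = hadd (mul a b) (mul a c)

namespace KrasnerHyperring

variable {R : Type u} [KrasnerHyperring R]

/-- A hyperideal of a Krasner hyperring. -/
structure Hyperideal (R : Type u) [KrasnerHyperring R] where
  carrier : Set R
  nonempty' : carrier.Nonempty
  hadd_subset' : ∀ a ∈ carrier, ∀ b ∈ carrier, hadd a b ⊆ carrier
  neg_mem' : ∀ a ∈ carrier, neg a ∈ carrier
  mul_mem' : ∀ r : R, ∀ a ∈ carrier, mul r a ∈ carrier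

instance : SetLike (Hyperideal R) R where
  coe := Hyperideal.carrier
  coe_injective := by rintro ⟨⟩ ⟨⟩ h; congr

/-- A hyperideal is proper if it is not the whole hyperring. -/
def Hyperideal.IsProper (N : Hyperideal R) : Prop := (N : Set R) ≠ Set.univ

/-- `A ⊕ B` for subsets. -/
def haddSet (A B : Set R) : Set R := ⋃ a ∈ A, ⋃ b ∈ B, hadd a b

/-- `A ∘ B` : set of all products. -/
def mulSet (A B : Set R) : Set R := {x : R | ∃ a ∈ A, ∃ b ∈ B, x = mul a b}

/-- The hyperideal generated by a set (as a set). -/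
def genIdeal (S : Set R) : Set R := ⋂₀ {C : Set R | (∃ I : Hyperideal R, C = ↑I) ∧ S ⊆ C}

/-- Products of `n` elements of `S`. -/
def setPow (S : Set R) : ℕ → Set R
  | 0 => Set.univ
  | 1 => S
  | (n+2) => mulSet S (setPow S (n+1))

/-- `N^n` : the hyperideal generated by products of `n` elements of `N`. -/
def idealPow (N : Hyperideal R) (n : ℕ) : Set R := genIdeal (setPow (↑N) n)

/-- Powers of an element. -/
def hpow (a : R) : ℕ → R
  | 0 => one
  | (n+1) => mul a (hpow a n)

/-- The radical of a set. -/
def radical (A : Set R) : Set R := {a : R | ∃ n : ℕ, 0 < n ∧ hpow a n ∈ A}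

/-- `(A : a)`. -/
def colon (A : Set R) (a : R) : Set R := {r : R | mul a r ∈ A}

/-- `(A : M)` for a set `M`. -/
def colonSet (A B : Set R) : Set R := {r : R | ∀ b ∈ B, mul r b ∈ A}

/-- Prime hyperideal. -/
def IsPrime (N : Hyperideal R) : Prop :=
  N.IsProper ∧ ∀ a b : R, mul a b ∈ N → a ∈ N ∨ b ∈ N

/-- Weakly prime hyperideal. -/
def IsWeaklyPrime (N : Hyperideal R) : Prop :=
  N.IsProper ∧ ∀ a b : R, mul a b ∈ N → mul a b ≠ zero → a ∈ N ∨ b ∈ N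

/-- `φ`-prime hyperideal. -/
def IsPhiPrime (φ : Hyperideal R → Set R) (N : Hyperideal R) : Prop :=
  N.IsProper ∧ ∀ a b : R, mul a b ∈ N → mul a b ∉ φ N → a ∈ N ∨ b ∈ N

/-- Primary hyperideal. -/
def IsPrimary (N : Hyperideal R) : Prop :=
  N.IsProper ∧ ∀ a b : R, mul a b ∈ N → a ∈ N ∨ ∃ k : ℕ, 0 < k ∧ hpow b k ∈ N

/-- `φ`-primary hyperideal. -/
def IsPhiPrimary (φ : Hyperideal R → Set R) (N : Hyperideal R) : Prop :=
  N.IsProper ∧ ∀ a b : R, mul a b ∈ N → mul a b ∉ φ N →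
    a ∈ N ∨ ∃ k : ℕ, 0 < k ∧ hpow b k ∈ N

/-- `δ`-primary hyperideal. -/
def IsDeltaPrimary (δ : Hyperideal R → Hyperideal R) (N : Hyperideal R) : Prop :=
  N.IsProper ∧ ∀ a b : R, mul a b ∈ N → a ∈ N ∨ b ∈ δ N

/-- `φ`-`δ`-primary hyperideal. -/
def IsPhiDeltaPrimary (φ : Hyperideal R → Set R) (δ : Hyperideal R → Hyperideal R)
    (N : Hyperideal R) : Prop :=
  N.IsProper ∧ ∀ a b : R, mul a b ∈ N → mul a b ∉ φ N → a ∈ N ∨ b ∈ δ N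

/-- `φ : L(R) → L(R) ∪ {∅}` : every value is a hyperideal or the empty set. -/
def MapsToIdealOrEmpty (φ : Hyperideal R → Set R) : Prop :=
  ∀ I : Hyperideal R, φ I = ∅ ∨ ∃ J : Hyperideal R, φ I = ↑J

/-- A reduction function. -/
def IsReduction (φ : Hyperideal R → Set R) : Prop :=
  MapsToIdealOrEmpty φ ∧ (∀ I : Hyperideal R, φ I ⊆ ↑I) ∧
    ∀ I J : Hyperideal R, (I : Set R) ⊆ ↑J → φ I ⊆ φ J

/-- An expansion function. -/
def IsExpansion (δ : Hyperideal R → Hyperideal R) : Prop :=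
  (∀ I : Hyperideal R, (I : Set R) ⊆ ↑(δ I)) ∧
    ∀ I J : Hyperideal R, (I : Set R) ⊆ ↑J → (δ I : Set R) ⊆ ↑(δ J)

/-- `φ_w(N) = ⋂_{n ≥ 1} N^n`. -/
def phiW (N : Hyperideal R) : Set R := ⋂ (n : ℕ) (_ : 1 ≤ n), idealPow N n

lemma zero_mem (N : Hyperideal R) : zero ∈ N := by
  obtain ⟨a, ha⟩ := N.nonempty'
  exact N.hadd_subset' a ha (neg a) (N.neg_mem' a ha) (zero_mem_hadd_neg a)

lemma proper_of_subset_proper {M T : Hyperideal R} (h : (M : Set R) ⊆ ↑T)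
    (hT : T.IsProper) : M.IsProper :=
  fun hu => hT (Set.univ_subset_iff.mp (hu ▸ h))

/-!
If `a ∘ b ∈ T` with `a ∉ T` and `b ∉ √T` escapes `φ_w(T)`, then `φ`-primality forces
`a ∘ b ∈ φ(T)`, so `(a, b)` is a `φ`-twin zero of `T`. Perturbing `a` and `b` by elements of `T`
keeps the pair a twin zero, which gives `T ∘ T ⊆ φ(T) ⊆ T³`. Then `T³ ⊆ Tⁿ` for every `n ≥ 1`,
so `a ∘ b ∈ φ(T) ⊆ T³ ⊆ φ_w(T)`, a contradiction.
-/

lemma mul_neg_eq_neg_mul (r a : R) : mul r (neg a) = neg (mul r a) := by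
  apply neg_unique
  have h : mul r zero ∈ (fun x => mul r x) '' hadd a (neg a) :=
    ⟨zero, zero_mem_hadd_neg a, rfl⟩
  rwa [distrib, mul_zero] at h

lemma mul_mem_hadd_mul {x y c : R} (r : R) (hc : c ∈ hadd x y) :
    mul r c ∈ hadd (mul r x) (mul r y) :=
  distrib r x y ▸ ⟨c, hc, rfl⟩

lemma hpow_succ_eq_mul (b : R) (k : ℕ) : hpow b (k + 1) = mul (hpow b k) b :=
  mul_comm b (hpow b k)

namespace Hyperideal

variable {I : Hyperideal R} {r x y c : R}

lemma mem_of_mem_hadd (hc : c ∈ hadd x y) (hy : y ∈ I) (hcI : c ∈ I) : x ∈ I := by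
  rw [hadd_comm] at hc
  exact I.hadd_subset' _ (I.neg_mem' y hy) c hcI (reversible y x c hc)

lemma notMem_of_mem_hadd (hc : c ∈ hadd x y) (hy : y ∈ I) (hx : x ∉ I) : c ∉ I :=
  fun hcI => hx (mem_of_mem_hadd hc hy hcI)

lemma mem_of_hadd_subset (hx : x ∈ I) (h : hadd x y ⊆ I) : y ∈ I := by
  obtain ⟨e, he⟩ := hadd_nonempty x y
  exact I.hadd_subset' _ (I.neg_mem' x hx) e (h he) (reversible x y e he)

lemma mul_mem_of_mem_hadd (hc : c ∈ hadd x y) (hx : mul r x ∈ I) (hy : mul r y ∈ I) :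
    mul r c ∈ I :=
  I.hadd_subset' _ hx _ hy (mul_mem_hadd_mul r hc)

lemma mul_mem_of_forall_mem_hadd (hx : mul r x ∈ I) (h : ∀ c ∈ hadd x y, mul r c ∈ I) :
    mul r y ∈ I := by
  refine mem_of_hadd_subset hx ?_
  rw [← distrib]
  rintro _ ⟨c, hc, rfl⟩
  exact h c hc

-- Elements of `x ⊕ I` are the elements congruent to `x` modulo `I`; this is transitivity.
lemma exists_mem_hadd_of_mem_hadd {w u v z : R} (hz : z ∈ hadd x u) (hx : x ∈ hadd w v)
    (hu : u ∈ I) (hv : v ∈ I) : ∃ t ∈ I, z ∈ hadd w t := by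
  have hmem : z ∈ ⋃ x' ∈ hadd w v, hadd x' u := Set.mem_iUnion₂.2 ⟨x, hx, hz⟩
  rw [hadd_assoc] at hmem
  obtain ⟨t, ht, hzt⟩ := Set.mem_iUnion₂.1 hmem
  exact ⟨t, I.hadd_subset' v hv u hu ht, hzt⟩

lemma exists_hpow_mem_hadd (hc : c ∈ hadd x y) (hy : y ∈ I) (k : ℕ) :
    ∃ t ∈ I, hpow c k ∈ hadd (hpow x k) t := by
  induction k with
  | zero => exact ⟨zero, zero_mem I, by simp [hpow, hadd_zero]⟩
  | succ k ih =>
    obtain ⟨t, ht, hk⟩ := ih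
    have hck := mul_mem_hadd_mul c hk
    have hxk := mul_mem_hadd_mul (hpow x k) hc
    rw [mul_comm c (hpow x k)] at hck
    rw [← hpow_succ_eq_mul] at hxk
    exact exists_mem_hadd_of_mem_hadd hck hxk (I.mul_mem' c t ht) (I.mul_mem' _ y hy)

lemma notMem_radical_of_mem_hadd (hc : c ∈ hadd x y) (hy : y ∈ I)
    (hx : x ∉ radical (I : Set R)) : c ∉ radical (I : Set R) := by
  rintro ⟨k, hk, hck⟩
  obtain ⟨t, ht, hkt⟩ := exists_hpow_mem_hadd hc hy k
  exact hx ⟨k, hk, mem_of_mem_hadd hkt ht hck⟩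

def colon (I : Hyperideal R) (r : R) : Hyperideal R where
  carrier := KrasnerHyperring.colon I r
  nonempty' := ⟨zero, show mul r zero ∈ I by rw [mul_zero]; exact zero_mem I⟩
  hadd_subset' _ ha _ hb _ hc := mul_mem_of_mem_hadd hc ha hb
  neg_mem' a ha := show mul r (neg a) ∈ I by
    rw [mul_neg_eq_neg_mul]; exact I.neg_mem' _ ha
  mul_mem' s a ha := show mul r (mul s a) ∈ I by
    rw [← mul_assoc, mul_comm r s, mul_assoc]; exact I.mul_mem' s _ ha

end Hyperideal

section GeneratedHyperideal

lemma subset_genIdeal (S : Set R) : S ⊆ genIdeal S := fun _ hx _ hC => hC.2 hx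

lemma genIdeal_subset {S : Set R} (I : Hyperideal R) (h : S ⊆ I) : genIdeal S ⊆ I :=
  fun _ hx => hx I ⟨⟨I, rfl⟩, h⟩

def genHyperideal (S : Set R) : Hyperideal R where
  carrier := genIdeal S
  nonempty' := ⟨zero, fun _ ⟨⟨I, hI⟩, _⟩ => hI ▸ zero_mem I⟩
  hadd_subset' a ha b hb x hx := fun _ ⟨⟨I, hI⟩, hS⟩ => by
    subst hI
    exact I.hadd_subset' a (ha _ ⟨⟨I, rfl⟩, hS⟩) b (hb _ ⟨⟨I, rfl⟩, hS⟩) hx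
  neg_mem' a ha := fun _ ⟨⟨I, hI⟩, hS⟩ => by
    subst hI
    exact I.neg_mem' a (ha _ ⟨⟨I, rfl⟩, hS⟩)
  mul_mem' r a ha := fun _ ⟨⟨I, hI⟩, hS⟩ => by
    subst hI
    exact I.mul_mem' r a (ha _ ⟨⟨I, rfl⟩, hS⟩)

lemma mul_mem_genIdeal_mulSet {A B : Set R} {t x : R} (ht : t ∈ A) (hx : x ∈ genIdeal B) :
    mul t x ∈ genIdeal (mulSet A B) :=
  genIdeal_subset ((genHyperideal (mulSet A B)).colon t)
    (fun y hy => subset_genIdeal _ ⟨t, ht, y, hy, rfl⟩) hx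

end GeneratedHyperideal

section IdealPow

variable {N : Hyperideal R}

lemma idealPow_succ_succ_subset (n : ℕ) : idealPow N (n + 2) ⊆ idealPow N (n + 1) := by
  refine genIdeal_subset (genHyperideal _) ?_
  rintro _ ⟨t, -, y, hy, rfl⟩
  exact (genHyperideal _).mul_mem' t y (subset_genIdeal _ hy)

lemma idealPow_subset_idealPow_succ_of_mul_mem
    (h : ∀ p ∈ N, ∀ q ∈ N, mul p q ∈ idealPow N 3) (n : ℕ) :
    idealPow N (n + 2) ⊆ idealPow N (n + 3) := by
  induction n with
  | zero =>
    refine genIdeal_subset (genHyperideal _) ?_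
    rintro _ ⟨p, hp, q, hq, rfl⟩
    exact h p hp q hq
  | succ m ih =>
    refine genIdeal_subset (genHyperideal _) ?_
    rintro _ ⟨t, ht, y, hy, rfl⟩
    exact mul_mem_genIdeal_mulSet ht (ih (subset_genIdeal _ hy))

-- `N ∘ N ⊆ N³` forces the chain `N ⊇ N² ⊇ N³ ⊇ ⋯` to stop at `N³`.
lemma idealPow_three_subset_phiW (h : ∀ p ∈ N, ∀ q ∈ N, mul p q ∈ idealPow N 3) :
    idealPow N 3 ⊆ phiW N := by
  intro x hx
  refine Set.mem_iInter₂.2 fun n hn => ?_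
  induction n, hn using Nat.le_induction with
  | base => exact idealPow_succ_succ_subset 0 (idealPow_succ_succ_subset 1 hx)
  | succ n hn ih =>
    obtain rfl | ⟨m, rfl⟩ : n = 1 ∨ ∃ m, n = m + 2 := by
      rcases n with _ | _ | m <;> simp_all
    · exact idealPow_succ_succ_subset 1 hx
    · exact idealPow_subset_idealPow_succ_of_mul_mem h m ih

end IdealPow

def IsPrimaryOutside (N : Hyperideal R) (J : Set R) : Prop :=
  ∀ x y : R, mul x y ∈ N → x ∉ N → y ∉ radical (N : Set R) → mul x y ∈ J

lemma IsPhiPrimary.isPrimaryOutside {φ : Hyperideal R → Set R} {N : Hyperideal R}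
    (h : IsPhiPrimary φ N) : IsPrimaryOutside N (φ N) :=
  fun x y hxy hx hy => by_contra fun hφ => (h.2 x y hxy hφ).elim hx hy

/-- With `J = φ T` this is a `φ`-twin zero of `T`. -/
structure IsTwinZero (T J : Hyperideal R) (a b : R) : Prop where
  mem : mul a b ∈ T
  mem_rel : mul a b ∈ J
  notMem : a ∉ T
  notMem_radical : b ∉ radical (T : Set R)

namespace IsTwinZero

variable {T J : Hyperideal R} {a b p q : R}

lemma mul_mem_left (h : IsTwinZero T J a b) (hT : IsPrimaryOutside T J) (hp : p ∈ T) :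
    mul a p ∈ J :=
  J.mul_mem_of_forall_mem_hadd h.mem_rel fun c hc =>
    hT a c (T.mul_mem_of_mem_hadd hc h.mem (T.mul_mem' a p hp)) h.notMem
      (Hyperideal.notMem_radical_of_mem_hadd hc hp h.notMem_radical)

lemma mul_mem_right (h : IsTwinZero T J a b) (hT : IsPrimaryOutside T J) (hq : q ∈ T) :
    mul b q ∈ J := by
  refine J.mul_mem_of_forall_mem_hadd (x := a) (mul_comm a b ▸ h.mem_rel) fun c hc => ?_
  have hbc : mul b c ∈ T :=
    T.mul_mem_of_mem_hadd hc (mul_comm a b ▸ h.mem) (T.mul_mem' b q hq)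
  rw [mul_comm] at hbc ⊢
  exact hT c b hbc (Hyperideal.notMem_of_mem_hadd hc hq h.notMem) h.notMem_radical

lemma mul_mem (h : IsTwinZero T J a b) (hT : IsPrimaryOutside T J) (hp : p ∈ T) (hq : q ∈ T) :
    mul p q ∈ J := by
  have hcq : ∀ c ∈ hadd a p, mul c q ∈ J := by
    intro c hc
    have hcb : ∀ I : Hyperideal R, mul b a ∈ I → mul b p ∈ I → mul c b ∈ I := fun I hba hbp =>
      mul_comm b c ▸ I.mul_mem_of_mem_hadd hc hba hbp
    refine J.mul_mem_of_forall_mem_hadd (x := b)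
      (hcb J (mul_comm a b ▸ h.mem_rel) (mul_comm p b ▸ h.mul_mem_right hT hp))
      fun d hd => hT c d ?_ (Hyperideal.notMem_of_mem_hadd hc hp h.notMem)
        (Hyperideal.notMem_radical_of_mem_hadd hd hq h.notMem_radical)
    exact T.mul_mem_of_mem_hadd hd
      (hcb T (mul_comm a b ▸ h.mem) (T.mul_mem' b p hp)) (T.mul_mem' c q hq)
  rw [mul_comm]
  refine J.mul_mem_of_forall_mem_hadd (x := a) (mul_comm a q ▸ h.mul_mem_left hT hq)
    fun c hc => mul_comm c q ▸ hcq c hc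

end IsTwinZero

/-- STATEMENT 11: If `T` is `φ`-primary for some `φ ≤ φ₃`, then `T` is `w`-primary. -/
theorem phiPrimary_le_phi3_wPrimary {R : Type u} [KrasnerHyperring R]
    (φ : Hyperideal R → Set R) (hφ : MapsToIdealOrEmpty φ)
    (hle : ∀ I : Hyperideal R, φ I ⊆ idealPow I 3)
    (T : Hyperideal R) (hT : IsPhiPrimary φ T) :
    IsPhiPrimary phiW T := by
  refine ⟨hT.1, fun a b hab hw => or_iff_not_imp_left.2 fun ha => by_contra fun hb => hw ?_⟩
  have habφ : mul a b ∈ φ T := hT.isPrimaryOutside a b hab ha hb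
  obtain hempty | ⟨J, hJ⟩ := hφ T
  · exact absurd habφ (hempty ▸ Set.notMem_empty _)
  have hTJ : IsPrimaryOutside T J := hJ ▸ hT.isPrimaryOutside
  have htwin : IsTwinZero T J a b := ⟨hab, (hJ ▸ habφ : mul a b ∈ (J : Set R)), ha, hb⟩
  have hsq : ∀ p ∈ T, ∀ q ∈ T, mul p q ∈ idealPow T 3 := fun p hp q hq =>
    hle T (hJ ▸ (htwin.mul_mem hTJ hp hq : mul p q ∈ (J : Set R)))
  exact idealPow_three_subset_phiW hsq (hle T habφ)

end KrasnerHyperring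
end

section
/- Let R be a commutative Krasner hyperring with nonzero identity, φ a reduction function and δ an expansion function on L(R), and N a proper hyperideal of R. Then the following are equivalent: (i) N is a φ-δ-primary hyperideal; (ii) for every a ∈ R − δ(N), (N : a) = N ∪ (φ(N) : a); (iii) for every a ∈ R − δ(N), (N : a) = N or (N : a) = (φ(N) : a); (iv) for all hyperideals K, L of R with K∘L ⊆ N and K∘L ⊄ φ(N), either K ⊆ N or L ⊆ δ(N); (v) for every hyperideal M of R with M ⊄ δ(N), (N : M) = N or (N : M) = (φ(N) : M). -/
universe u

namespace KrasnerHyperring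

variable {R : Type u} [KrasnerHyperring R]

/-! The colon conditions (ii), (iii) and (v) are the defining implication read one factor at a time,
with principal hyperideals recovering elements from hyperideals. The substance is (i) ⇒ (iv):
for `l ∈ L \ δ(N)` the hyperideal `(φ(N) : l)` contains `K \ N`, and a hyperideal containing
`K \ N ≠ ∅` contains all of `K`, since every `k ∈ K ∩ N` is a difference of two elements of
`K \ N`. Doing this in both factors gives `K ∘ L ⊆ φ(N)`. The passage from (ii) to (iii) is the
hyperring form of the fact that a group is never the union of two proper subgroups. -/

lemma mul_mem_hadd {b c z : R} (a : R) (hz : z ∈ hadd b c) :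
    mul a z ∈ hadd (mul a b) (mul a c) := by
  rw [← distrib]; exact ⟨z, hz, rfl⟩

lemma mul_neg' (a b : R) : mul a (neg b) = neg (mul a b) := by
  apply neg_unique
  simpa only [mul_zero] using mul_mem_hadd a (zero_mem_hadd_neg b)

namespace Hyperideal

lemma mem_of_mem_hadd_of_mem (J : Hyperideal R) {u w z : R} (hu : u ∈ J) (hz : z ∈ J)
    (h : z ∈ hadd u w) : w ∈ J :=
  J.hadd_subset' (neg u) (J.neg_mem' u hu) z hz (reversible u w z h)

lemma subset_or_subset_of_subset_union {H A B : Hyperideal R}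
    (h : (H : Set R) ⊆ ↑A ∪ ↑B) : (H : Set R) ⊆ ↑A ∨ (H : Set R) ⊆ ↑B := by
  by_contra! ⟨hA, hB⟩
  obtain ⟨x, hxH, hxA⟩ := Set.not_subset.mp hA
  obtain ⟨y, hyH, hyB⟩ := Set.not_subset.mp hB
  have hxB : x ∈ B := (h hxH).resolve_left hxA
  have hyA : y ∈ A := (h hyH).resolve_right hyB
  obtain ⟨z, hz⟩ := hadd_nonempty x y
  rcases h (H.hadd_subset' x hxH y hyH hz) with hzA | hzB
  · exact hxA (A.mem_of_mem_hadd_of_mem hyA hzA (hadd_comm x y ▸ hz))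
  · exact hyB (B.mem_of_mem_hadd_of_mem hxB hzB hz)

lemma subset_of_diff_subset {K N I : Hyperideal R} (hK : ¬ (K : Set R) ⊆ N)
    (h : (K : Set R) \ N ⊆ I) : (K : Set R) ⊆ I := by
  obtain ⟨k₀, hk₀, hk₀N⟩ := Set.not_subset.mp hK
  intro k hk
  by_cases hkN : k ∈ N
  · obtain ⟨z, hz⟩ := hadd_nonempty k k₀
    have hzN : z ∉ N := fun hzN => hk₀N (N.mem_of_mem_hadd_of_mem hkN hzN hz)
    have hzI : z ∈ I := h ⟨K.hadd_subset' k hk k₀ hk₀ hz, hzN⟩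
    exact I.mem_of_mem_hadd_of_mem (h ⟨hk₀, hk₀N⟩) hzI (hadd_comm k k₀ ▸ hz)
  · exact h ⟨hk, hkN⟩

end Hyperideal

def colonIdeal (J : Hyperideal R) (a : R) : Hyperideal R where
  carrier := colon (↑J) a
  nonempty' := ⟨zero, show mul a zero ∈ J by rw [mul_zero]; exact zero_mem J⟩
  hadd_subset' := fun x hx y hy z hz =>
    J.hadd_subset' (mul a x) hx (mul a y) hy (mul_mem_hadd a hz)
  neg_mem' := fun x hx => show mul a (neg x) ∈ J by
    rw [mul_neg']; exact J.neg_mem' (mul a x) hx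
  mul_mem' := fun r x hx => show mul a (mul r x) ∈ J by
    rw [← mul_assoc, mul_comm a r, mul_assoc]; exact J.mul_mem' r (mul a x) hx

def colonSetIdeal (J : Hyperideal R) (M : Set R) : Hyperideal R where
  carrier := colonSet (↑J) M
  nonempty' := ⟨zero, fun b _ => by rw [mul_comm, mul_zero]; exact zero_mem J⟩
  hadd_subset' := fun x hx y hy z hz b hb => by
    show mul z b ∈ J
    rw [mul_comm]
    refine J.hadd_subset' (mul b x) ?_ (mul b y) ?_ (mul_mem_hadd b hz) <;> rw [mul_comm]
    exacts [hx b hb, hy b hb]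
  neg_mem' := fun x hx b hb => by
    show mul (neg x) b ∈ J
    rw [mul_comm, mul_neg', mul_comm]
    exact J.neg_mem' (mul x b) (hx b hb)
  mul_mem' := fun r x hx b hb => by
    show mul (mul r x) b ∈ J
    rw [mul_assoc]
    exact J.mul_mem' r (mul x b) (hx b hb)

def princ (a : R) : Hyperideal R where
  carrier := {x | ∃ r, x = mul r a}
  nonempty' := ⟨a, one, by rw [mul_comm, mul_one]⟩
  hadd_subset' := by
    rintro x ⟨r, rfl⟩ y ⟨s, rfl⟩ z hz
    rw [mul_comm r, mul_comm s, ← distrib] at hz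
    obtain ⟨t, _, rfl⟩ := hz
    exact ⟨t, mul_comm a t⟩
  neg_mem' := by
    rintro x ⟨r, rfl⟩
    exact ⟨neg r, by rw [mul_comm (neg r) a, mul_neg', mul_comm a r]⟩
  mul_mem' := by
    rintro s x ⟨r, rfl⟩
    exact ⟨mul s r, (mul_assoc s r a).symm⟩

lemma mem_princ_self (a : R) : a ∈ princ a :=
  ⟨one, by rw [mul_comm, mul_one]⟩

lemma princ_subset {I : Hyperideal R} {a : R} (ha : a ∈ I) : (princ a : Set R) ⊆ I := by
  rintro x ⟨r, rfl⟩
  exact I.mul_mem' r a ha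

lemma princ_subset_colonIdeal {N : Hyperideal R} {a b : R} (hab : mul a b ∈ N) :
    (princ b : Set R) ⊆ colonIdeal N a :=
  princ_subset hab

lemma mulSet_princ_subset {N : Hyperideal R} {a b : R} (hab : mul a b ∈ N) :
    mulSet (princ a : Set R) (princ b) ⊆ N := by
  rintro _ ⟨k, hk, l, hl, rfl⟩
  have hkb : mul k b ∈ N := by
    rw [mul_comm]
    exact princ_subset_colonIdeal (by rwa [mul_comm]) hk
  exact princ_subset_colonIdeal hkb hl

lemma colon_empty (a : R) : colon (∅ : Set R) a = ∅ := rfl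

section Characterizations

variable {φ : Hyperideal R → Set R} {δ : Hyperideal R → Hyperideal R} {N : Hyperideal R}

lemma IsPhiDeltaPrimary.mem_of_mem_colon (hN : IsPhiDeltaPrimary φ δ N) {a r : R}
    (ha : a ∉ δ N) (hr : r ∈ colon N a) (hrφ : r ∉ colon (φ N) a) : r ∈ N := by
  rw [colon, Set.mem_ofPred_eq, mul_comm] at hr hrφ
  exact (hN.2 r a hr hrφ).resolve_right ha

lemma isPhiDeltaPrimary_iff_colon_eq_union (hN : N.IsProper) (hφN : φ N ⊆ N) :
    IsPhiDeltaPrimary φ δ N ↔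
      ∀ a ∉ δ N, colon (N : Set R) a = (N : Set R) ∪ colon (φ N) a := by
  refine ⟨fun hP a ha => ?_, fun h => ⟨hN, fun a b hab habφ => ?_⟩⟩
  · refine Set.Subset.antisymm (fun r hr => ?_) (Set.union_subset (N.mul_mem' a) ?_)
    · by_cases hrφ : r ∈ colon (φ N) a
      exacts [Or.inr hrφ, Or.inl (hP.mem_of_mem_colon ha hr hrφ)]
    · exact fun r hr => hφN hr
  · by_cases hb : b ∈ δ N
    · exact Or.inr hb
    have ha : a ∈ colon (N : Set R) b := by rwa [colon, Set.mem_ofPred_eq, mul_comm]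
    rw [h b hb] at ha
    exact Or.inl (ha.resolve_right fun ha => habφ (by rwa [mul_comm]))

lemma colon_eq_or_colon_eq_of_colon_eq_union {P : Set R}
    (hP : P = ∅ ∨ ∃ J : Hyperideal R, P = J) {a : R}
    (h : colon (N : Set R) a = (N : Set R) ∪ colon P a) :
    colon (N : Set R) a = N ∨ colon (N : Set R) a = colon P a := by
  obtain rfl | ⟨J, rfl⟩ := hP
  · rw [h, colon_empty, Set.union_empty]
    exact Or.inl rfl
  rcases Hyperideal.subset_or_subset_of_subset_union (H := colonIdeal N a) (A := N)
      (B := colonIdeal J a) h.subset with hs | hs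
  · exact Or.inl (hs.antisymm (Set.subset_union_left.trans h.superset))
  · exact Or.inr (hs.antisymm (Set.subset_union_right.trans h.superset))

lemma isPhiDeltaPrimary_of_colon_eq_or (hN : N.IsProper)
    (h : ∀ a ∉ δ N, colon (N : Set R) a = N ∨ colon (N : Set R) a = colon (φ N) a) :
    IsPhiDeltaPrimary φ δ N := by
  refine ⟨hN, fun a b hab habφ => or_iff_not_imp_right.mpr fun hb => ?_⟩
  have ha : a ∈ colon (N : Set R) b := by rwa [colon, Set.mem_ofPred_eq, mul_comm]
  rcases h b hb with he | he
  · rwa [he] at ha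
  · rw [he, colon, Set.mem_ofPred_eq, mul_comm] at ha
    exact absurd ha habφ

lemma IsPhiDeltaPrimary.subset_or_subset_of_mulSet_subset (hN : IsPhiDeltaPrimary φ δ N)
    (hφ : φ N = ∅ ∨ ∃ J : Hyperideal R, φ N = J) {K L : Hyperideal R}
    (hKL : mulSet (K : Set R) L ⊆ N) (hKLφ : ¬ mulSet (K : Set R) L ⊆ φ N) :
    (K : Set R) ⊆ N ∨ (L : Set R) ⊆ δ N := by
  by_contra! ⟨hK, hL⟩
  have hφKL : ∀ k ∈ K, k ∉ N → ∀ l ∈ L, l ∉ δ N → mul k l ∈ φ N :=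
    fun k hk hkN l hl hlδ => by_contra fun h =>
      (hN.2 k l (hKL ⟨k, hk, l, hl, rfl⟩) h).elim hkN hlδ
  obtain ⟨k₀, hk₀, hk₀N⟩ := Set.not_subset.mp hK
  obtain ⟨l₀, hl₀, hl₀δ⟩ := Set.not_subset.mp hL
  obtain hφ | ⟨J, hJ⟩ := hφ
  · exact (hφ ▸ hφKL k₀ hk₀ hk₀N l₀ hl₀ hl₀δ : mul k₀ l₀ ∈ (∅ : Set R))
  have hKJ : ∀ l ∈ L, l ∉ δ N → (K : Set R) ⊆ colonIdeal J l := fun l hl hlδ =>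
    Hyperideal.subset_of_diff_subset hK fun k ⟨hk, hkN⟩ => by
      show mul l k ∈ (J : Set R)
      rw [mul_comm, ← hJ]
      exact hφKL k hk hkN l hl hlδ
  refine hKLφ (hJ ▸ ?_)
  rintro _ ⟨k, hk, l, hl, rfl⟩
  refine Hyperideal.subset_of_diff_subset (I := colonIdeal J k) hL (fun l ⟨hl, hlδ⟩ => ?_) hl
  show mul k l ∈ (J : Set R)
  rw [mul_comm]
  exact hKJ l hl hlδ hk

lemma isPhiDeltaPrimary_of_mulSet_subset (hN : N.IsProper)
    (h : ∀ K L : Hyperideal R, mulSet (K : Set R) L ⊆ N → ¬ mulSet (K : Set R) L ⊆ φ N →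
      (K : Set R) ⊆ N ∨ (L : Set R) ⊆ δ N) :
    IsPhiDeltaPrimary φ δ N := by
  refine ⟨hN, fun a b hab habφ => ?_⟩
  rcases h (princ a) (princ b) (mulSet_princ_subset hab)
      (fun hs => habφ (hs ⟨a, mem_princ_self a, b, mem_princ_self b, rfl⟩)) with hs | hs
  exacts [Or.inl (hs (mem_princ_self a)), Or.inr (hs (mem_princ_self b))]

lemma colonSet_eq_or_of_mulSet_subset (hφN : φ N ⊆ N)
    (h : ∀ K L : Hyperideal R, mulSet (K : Set R) L ⊆ N → ¬ mulSet (K : Set R) L ⊆ φ N →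
      (K : Set R) ⊆ N ∨ (L : Set R) ⊆ δ N)
    {M : Hyperideal R} (hM : ¬ (M : Set R) ⊆ δ N) :
    colonSet (N : Set R) M = N ∨ colonSet (N : Set R) M = colonSet (φ N) M := by
  by_cases hc : mulSet (colonSetIdeal N M : Set R) M ⊆ φ N
  · exact Or.inr <| Set.Subset.antisymm (fun r hr m hm => hc ⟨r, hr, m, hm, rfl⟩)
      fun r hr m hm => hφN (hr m hm)
  · have hN : (colonSetIdeal N M : Set R) ⊆ N :=
      ((h _ M (fun _ ⟨k, hk, m, hm, he⟩ => he ▸ hk m hm) hc).resolve_right hM)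
    refine Or.inl (hN.antisymm fun r hr m _ => ?_)
    rw [mul_comm]
    exact N.mul_mem' m r hr

lemma isPhiDeltaPrimary_of_colonSet_eq_or (hN : N.IsProper)
    (h : ∀ M : Hyperideal R, ¬ (M : Set R) ⊆ δ N →
      colonSet (N : Set R) M = N ∨ colonSet (N : Set R) M = colonSet (φ N) M) :
    IsPhiDeltaPrimary φ δ N := by
  refine ⟨hN, fun a b hab habφ => or_iff_not_imp_right.mpr fun hb => ?_⟩
  have ha : a ∈ colonSet (N : Set R) (princ b) := fun _ hx => princ_subset_colonIdeal hab hx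
  rcases h (princ b) (fun hs => hb (hs (mem_princ_self b))) with he | he
  · rwa [he] at ha
  · rw [he] at ha
    exact absurd (ha b (mem_princ_self b)) habφ

end Characterizations

theorem phiDeltaPrimary_characterizations_general {R : Type u} [KrasnerHyperring R]
    (φ : Hyperideal R → Set R) (δ : Hyperideal R → Hyperideal R)
    (hφ : IsReduction φ)
    (N : Hyperideal R) (hN : N.IsProper) :
    (IsPhiDeltaPrimary φ δ N ↔
      ∀ a : R, a ∉ (δ N : Set R) →
        colon (N : Set R) a = (N : Set R) ∪ colon (φ N) a) ∧
    (IsPhiDeltaPrimary φ δ N ↔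
      ∀ a : R, a ∉ (δ N : Set R) →
        colon (N : Set R) a = (N : Set R) ∨ colon (N : Set R) a = colon (φ N) a) ∧
    (IsPhiDeltaPrimary φ δ N ↔
      ∀ K L : Hyperideal R, mulSet (K : Set R) (L : Set R) ⊆ (N : Set R) →
        ¬ mulSet (K : Set R) (L : Set R) ⊆ φ N →
        (K : Set R) ⊆ (N : Set R) ∨ (L : Set R) ⊆ (δ N : Set R)) ∧
    (IsPhiDeltaPrimary φ δ N ↔
      ∀ M : Hyperideal R, ¬ (M : Set R) ⊆ (δ N : Set R) →
        colonSet (N : Set R) (M : Set R) = (N : Set R) ∨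
          colonSet (N : Set R) (M : Set R) = colonSet (φ N) (M : Set R)) := by
  have hφN : φ N ⊆ N := hφ.2.1 N
  have i_iff_ii := isPhiDeltaPrimary_iff_colon_eq_union (δ := δ) hN hφN
  have i_iff_iv : IsPhiDeltaPrimary φ δ N ↔ _ :=
    ⟨fun hP _ _ => hP.subset_or_subset_of_mulSet_subset (hφ.1 N),
      isPhiDeltaPrimary_of_mulSet_subset hN⟩
  refine ⟨i_iff_ii, ⟨fun hP a ha => ?_, isPhiDeltaPrimary_of_colon_eq_or hN⟩, i_iff_iv,
    ⟨fun hP _ => colonSet_eq_or_of_mulSet_subset hφN (i_iff_iv.mp hP),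
      isPhiDeltaPrimary_of_colonSet_eq_or hN⟩⟩
  exact colon_eq_or_colon_eq_of_colon_eq_union (hφ.1 N) (i_iff_ii.mp hP a ha)

/-- STATEMENT 14: characterizations of `φ`-`δ`-primary hyperideals. -/
theorem phiDeltaPrimary_characterizations {R : Type u} [KrasnerHyperring R]
    (φ : Hyperideal R → Set R) (δ : Hyperideal R → Hyperideal R)
    (hφ : IsReduction φ) (hδ : IsExpansion δ)
    (N : Hyperideal R) (hN : N.IsProper) :
    (IsPhiDeltaPrimary φ δ N ↔
      ∀ a : R, a ∉ (δ N : Set R) →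
        colon (N : Set R) a = (N : Set R) ∪ colon (φ N) a) ∧
    (IsPhiDeltaPrimary φ δ N ↔
      ∀ a : R, a ∉ (δ N : Set R) →
        colon (N : Set R) a = (N : Set R) ∨ colon (N : Set R) a = colon (φ N) a) ∧
    (IsPhiDeltaPrimary φ δ N ↔
      ∀ K L : Hyperideal R, mulSet (K : Set R) (L : Set R) ⊆ (N : Set R) →
        ¬ mulSet (K : Set R) (L : Set R) ⊆ φ N →
        (K : Set R) ⊆ (N : Set R) ∨ (L : Set R) ⊆ (δ N : Set R)) ∧
    (IsPhiDeltaPrimary φ δ N ↔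
      ∀ M : Hyperideal R, ¬ (M : Set R) ⊆ (δ N : Set R) →
        colonSet (N : Set R) (M : Set R) = (N : Set R) ∨
          colonSet (N : Set R) (M : Set R) = colonSet (φ N) (M : Set R)) :=
  phiDeltaPrimary_characterizations_general φ δ hφ N hN

end KrasnerHyperring
end
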